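/- Let r ∈ (0,1) and let p ∈ 𝒱_r be represented by measures (μ₁, μ₂) as p = p[r, μ₁, μ₂]. Define p̃(z) := 1 − p(r/z) for z ∈ 𝔸_r. Then p̃ ∈ 𝒱_r, and p̃ = p[r, μ̂₂, μ̂₁], where μ̂ denotes the push-forward of μ under the conjugation map z ↦ conj(z) on the unit circle. -/

import Mathlib

open Complex Set MeasureTheory

/-- The Villat kernel `K_r(z) = 1 + 2 ∑_{k≥1} (z^k − r^{2k} z^{−k})/(1 − r^{2k})`. -/
noncomputable def villatK (r : ℝ) (z : ℂ) : ℂ :=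
  1 + 2 * ∑' k : ℕ,
    ((z ^ (k + 1) - (r : ℂ) ^ (2 * (k + 1)) * z⁻¹ ^ (k + 1)) /
      (1 - (r : ℂ) ^ (2 * (k + 1))))

/-- `p = p[r, μ₁, μ₂]`: the Villat–Stieltjes representation by positive Borel measures
`μ₁, μ₂` on the unit circle with total mass `μ₁(𝕋) + μ₂(𝕋) = 1`. -/
structure IsVillatRep (r : ℝ) (μ₁ μ₂ : Measure ℂ) (p : ℂ → ℂ) : Prop where
  finite₁ : IsFiniteMeasure μ₁
  finite₂ : IsFiniteMeasure μ₂
  circle₁ : μ₁ {ξ : ℂ | ‖ξ‖ ≠ 1} = 0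
  circle₂ : μ₂ {ξ : ℂ | ‖ξ‖ ≠ 1} = 0
  mass : (μ₁ Set.univ).toReal + (μ₂ Set.univ).toReal = 1
  repr : ∀ z : ℂ, r < ‖z‖ → ‖z‖ < 1 →
    p z = (∫ ξ, villatK r (z / ξ) ∂μ₁) + ∫ ξ, (1 - villatK r ((r : ℂ) * ξ / z)) ∂μ₂
/-!
On the unit circle `conj ξ = ξ⁻¹`, so pushing the measures forward by conjugation turns
`∫ K_r(z/ξ)` into `∫ K_r(zξ)` and `∫ K_r(rξ/z)` into `∫ K_r((r/z)/ξ)`. Evaluating the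
representation of `p` at `w = r/z`, where `rξ/w = zξ`, and using `∫ (1 - f) dμ = μ(𝕋) - ∫ f dμ`
together with `μ₁(𝕋) + μ₂(𝕋) = 1` gives `1 - p(w)` in the required form. All integrals are
finite because, by the Weierstrass M-test, `K_r` is continuous on each circle `|u| = a` with
`r² < a < 1`.
-/

open Metric

/-- `villatK r u = 1 + 2 * ∑' k, villatTerm r k u` holds by `rfl`. -/
noncomputable def villatTerm (r : ℝ) (k : ℕ) (u : ℂ) : ℂ :=
  (u ^ (k + 1) - (r : ℂ) ^ (2 * (k + 1)) * u⁻¹ ^ (k + 1)) / (1 - (r : ℂ) ^ (2 * (k + 1)))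

lemma norm_villatTerm_le {r : ℝ} (hr0 : 0 ≤ r) (hr1 : r < 1) (k : ℕ) (u : ℂ) :
    ‖villatTerm r k u‖ ≤ (‖u‖ ^ (k + 1) + (r ^ 2 / ‖u‖) ^ (k + 1)) / (1 - r ^ 2) := by
  have hrk : r ^ (2 * (k + 1)) ≤ r ^ 2 := pow_le_pow_of_le_one hr0 hr1.le (by omega)
  have hrk1 : r ^ (2 * (k + 1)) < 1 := pow_lt_one₀ hr0 hr1 (by omega)
  have hden : ‖(1 : ℂ) - (r : ℂ) ^ (2 * (k + 1))‖ = 1 - r ^ (2 * (k + 1)) := by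
    rw [← ofReal_pow, ← ofReal_one, ← ofReal_sub, norm_real, Real.norm_of_nonneg (by linarith)]
  have hnum : ‖u ^ (k + 1) - (r : ℂ) ^ (2 * (k + 1)) * u⁻¹ ^ (k + 1)‖ ≤
      ‖u‖ ^ (k + 1) + (r ^ 2 / ‖u‖) ^ (k + 1) := by
    refine (norm_sub_le _ _).trans_eq ?_
    rw [norm_mul, norm_pow, norm_pow, norm_pow, norm_inv, norm_real, Real.norm_of_nonneg hr0,
      pow_mul, ← mul_pow, div_eq_mul_inv]
  rw [villatTerm, norm_div, hden]
  exact div_le_div₀ (by positivity) hnum (by nlinarith) (by linarith)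

lemma summable_villatTerm_bound {r a : ℝ} (hra : r ^ 2 < a) (ha1 : a < 1) :
    Summable fun k : ℕ => (a ^ (k + 1) + (r ^ 2 / a) ^ (k + 1)) / (1 - r ^ 2) := by
  have ha0 : 0 < a := (sq_nonneg r).trans_lt hra
  have hb1 : r ^ 2 / a < 1 := (div_lt_one ha0).2 hra
  have geom : ∀ {b : ℝ}, 0 ≤ b → b < 1 → Summable fun k : ℕ => b ^ (k + 1) := fun hb0 hb1 =>
    (summable_nat_add_iff 1).2 (summable_geometric_of_lt_one hb0 hb1)
  exact ((geom ha0.le ha1).add (geom (by positivity) hb1)).div_const _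

lemma continuousOn_villatK_sphere {r a : ℝ} (hr0 : 0 ≤ r) (hra : r ^ 2 < a) (ha1 : a < 1) :
    ContinuousOn (villatK r) (sphere 0 a) := by
  have ha0 : 0 < a := (sq_nonneg r).trans_lt hra
  have hr1 : r < 1 := by nlinarith
  have hne : ∀ u ∈ sphere (0 : ℂ) a, u ≠ 0 := fun u hu =>
    ne_zero_of_mem_sphere ha0.ne' ⟨u, hu⟩
  show ContinuousOn (fun u => 1 + 2 * ∑' k, villatTerm r k u) _
  refine continuousOn_const.add (continuousOn_const.mul
    (continuousOn_tsum (fun k => ?_) (summable_villatTerm_bound hra ha1) fun k u hu => ?_))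
  · unfold villatTerm
    fun_prop (disch := assumption)
  · simpa [mem_sphere_zero_iff_norm.1 hu] using norm_villatTerm_le hr0 hr1 k u

lemma ContinuousOn.integrable_of_ae_mem_isCompact {X E : Type*} [TopologicalSpace X] [T2Space X]
    [MeasurableSpace X] [OpensMeasurableSpace X] [NormedAddCommGroup E] {μ : Measure X}
    [IsFiniteMeasureOnCompacts μ] {K : Set X} {f : X → E} (hf : ContinuousOn f K)
    (hK : IsCompact K) (hμ : ∀ᵐ x ∂μ, x ∈ K) : Integrable f μ := by
  rw [← Measure.restrict_eq_self_of_ae_mem hμ]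
  exact hf.integrableOn_compact hK

lemma ae_mem_unit_sphere {μ : Measure ℂ} (hμ : μ {ξ : ℂ | ‖ξ‖ ≠ 1} = 0) :
    ∀ᵐ ξ ∂μ, ξ ∈ sphere (0 : ℂ) 1 := by
  simpa [ae_iff] using hμ

lemma integrable_villatK_comp {r a : ℝ} (hr0 : 0 ≤ r) (hra : r ^ 2 < a) (ha1 : a < 1)
    {μ : Measure ℂ} [IsFiniteMeasure μ] (hμ : μ {ξ : ℂ | ‖ξ‖ ≠ 1} = 0) {g : ℂ → ℂ}
    (hg : ContinuousOn g (sphere 0 1)) (hga : MapsTo g (sphere 0 1) (sphere 0 a)) :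
    Integrable (fun ξ => villatK r (g ξ)) μ :=
  ((continuousOn_villatK_sphere hr0 hra ha1).comp hg hga).integrable_of_ae_mem_isCompact
    (isCompact_sphere 0 1) (ae_mem_unit_sphere hμ)

lemma IsVillatRep.one_sub_apply_ofReal_div {r : ℝ} {μ₁ μ₂ : Measure ℂ} {p : ℂ → ℂ}
    (hp : IsVillatRep r μ₁ μ₂ p) (hr0 : 0 < r) {z : ℂ} (hz1 : r < ‖z‖) (hz2 : ‖z‖ < 1) :
    1 - p (r / z) = (∫ ξ, villatK r (z * ξ) ∂μ₂) + ∫ ξ, (1 - villatK r (r / z / ξ)) ∂μ₁ := by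
  have := hp.finite₁
  have := hp.finite₂
  have hz0 : 0 < ‖z‖ := hr0.trans hz1
  have hw : ‖(r : ℂ) / z‖ = r / ‖z‖ := by rw [norm_div, norm_real, Real.norm_of_nonneg hr0.le]
  have hw1 : r < ‖(r : ℂ) / z‖ := by rw [hw, lt_div_iff₀ hz0]; nlinarith
  have hw2 : ‖(r : ℂ) / z‖ < 1 := by rw [hw, div_lt_one hz0]; exact hz1
  have hmaps : ∀ c : ℂ, MapsTo (fun ξ => c * ξ) (sphere 0 1) (sphere 0 ‖c‖) ∧
      MapsTo (fun ξ => c / ξ) (sphere 0 1) (sphere 0 ‖c‖) := fun c =>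
    ⟨fun ξ hξ => by simp_all, fun ξ hξ => by simp_all⟩
  have hint₁ : Integrable (fun ξ => villatK r (r / z / ξ)) μ₁ :=
    integrable_villatK_comp hr0.le (by nlinarith) hw2 hp.circle₁
      (continuousOn_const.div continuousOn_id fun ξ hξ => ne_zero_of_mem_unit_sphere ⟨ξ, hξ⟩)
      (hmaps _).2
  have hint₂ : Integrable (fun ξ => villatK r (z * ξ)) μ₂ :=
    integrable_villatK_comp hr0.le (by nlinarith) hz2 hp.circle₂
      (continuousOn_const.mul continuousOn_id) (hmaps z).1
  have hmass : (μ₁.real univ : ℂ) + μ₂.real univ = 1 := by exact_mod_cast hp.mass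
  have hdiv : ∀ ξ : ℂ, (r : ℂ) * ξ / (r / z) = z * ξ := fun ξ => by
    field_simp [ofReal_ne_zero.2 hr0.ne', norm_pos_iff.1 hz0]
  rw [hp.repr _ hw1 hw2, integral_sub (integrable_const 1) hint₁]
  simp only [hdiv]
  rw [integral_sub (integrable_const 1) hint₂, integral_const, integral_const]
  simp only [real_smul, mul_one]
  linear_combination -hmass

/-- If `p = p[r, μ₁, μ₂] ∈ 𝒱_r`, then `p̃(z) := 1 − p(r/z)` belongs to `𝒱_r` and
`p̃ = p[r, μ̂₂, μ̂₁]`, where `μ̂` is the push-forward of `μ` under `z ↦ conj z`. -/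
theorem villat_class_involution
    (r : ℝ) (hr : r ∈ Ioo (0:ℝ) 1) (μ₁ μ₂ : Measure ℂ) (p : ℂ → ℂ)
    (hp : IsVillatRep r μ₁ μ₂ p) :
    IsVillatRep r (Measure.map (starRingEnd ℂ) μ₂) (Measure.map (starRingEnd ℂ) μ₁)
      (fun z => 1 - p ((r : ℂ) / z)) := by
  have := hp.finite₁
  have := hp.finite₂
  have hconj : MeasurableEmbedding (starRingEnd ℂ) :=
    isometry_conj.isClosedEmbedding.measurableEmbedding
  have hcircle : starRingEnd ℂ ⁻¹' {ξ : ℂ | ‖ξ‖ ≠ 1} = {ξ : ℂ | ‖ξ‖ ≠ 1} := by ext; simp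
  refine ⟨inferInstance, inferInstance, ?_, ?_, ?_, fun z hz1 hz2 => ?_⟩
  · rw [hconj.map_apply, hcircle, hp.circle₂]
  · rw [hconj.map_apply, hcircle, hp.circle₁]
  · simp only [hconj.map_apply, preimage_univ]
    linarith [hp.mass]
  · rw [hp.one_sub_apply_ofReal_div hr.1 hz1 hz2, hconj.integral_map, hconj.integral_map]
    congr 1 <;> refine integral_congr_ae ?_
    · filter_upwards [ae_mem_unit_sphere hp.circle₂] with ξ hξ
      rw [← inv_eq_conj (mem_sphere_zero_iff_norm.1 hξ), div_inv_eq_mul]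
    · filter_upwards [ae_mem_unit_sphere hp.circle₁] with ξ hξ
      rw [← inv_eq_conj (mem_sphere_zero_iff_norm.1 hξ), ← div_eq_mul_inv, div_right_comm]
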